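/- If G has an efficient dominating set (a dominating set S with the closed neighborhoods N[u], u ∈ S, pairwise disjoint), then for any graph H, γ_R(G □ H) ≥ γ(G)·γ_R(H). -/

import Mathlib

open Finset

/-- A set `S` is a dominating set of `G` if every vertex outside `S` has a neighbor in `S`. -/
def IsDominatingSet {V : Type*} (G : SimpleGraph V) (S : Set V) : Prop :=
  ∀ v, v ∉ S → ∃ u ∈ S, G.Adj u v

/-- The domination number `γ(G)`. -/
noncomputable def domNum {V : Type*} [Fintype V] (G : SimpleGraph V) : ℕ :=
  sInf {n | ∃ S : Finset V, IsDominatingSet G ↑S ∧ S.card = n}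

/-- A Roman dominating function: values in {0,1,2}, every vertex of value 0 has a
neighbor of value 2. -/
def IsRDF {V : Type*} (G : SimpleGraph V) (f : V → ℕ) : Prop :=
  (∀ v, f v ≤ 2) ∧ ∀ v, f v = 0 → ∃ u, G.Adj u v ∧ f u = 2

/-- The Roman domination number `γ_R(G)`. -/
noncomputable def romanDomNum {V : Type*} [Fintype V] (G : SimpleGraph V) : ℕ :=
  sInf {n | ∃ f : V → ℕ, IsRDF G f ∧ ∑ v, f v = n}

/-- The strong product of graphs. -/
def strongProd {V W : Type*} (G : SimpleGraph V) (H : SimpleGraph W) :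
    SimpleGraph (V × W) where
  Adj x y := x ≠ y ∧ (x.1 = y.1 ∨ G.Adj x.1 y.1) ∧ (x.2 = y.2 ∨ H.Adj x.2 y.2)
  symm := ⟨fun x y => by
    rintro ⟨h, h1, h2⟩
    refine ⟨h.symm, ?_, ?_⟩
    · cases h1 with
      | inl h => exact Or.inl h.symm
      | inr h => exact Or.inr h.symm
    · cases h2 with
      | inl h => exact Or.inl h.symm
      | inr h => exact Or.inr h.symm⟩
  loopless := ⟨fun x => by simp⟩

/-- `G` has an efficient dominating set: a dominating set whose elements have
pairwise disjoint closed neighborhoods. -/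
def HasEfficientDomSet {V : Type*} (G : SimpleGraph V) : Prop :=
  ∃ S : Finset V, IsDominatingSet G ↑S ∧
    ∀ u ∈ S, ∀ v ∈ S, u ≠ v →
      Disjoint (insert u (G.neighborSet u)) (insert v (G.neighborSet v))

/-!
Take a minimum Roman dominating function `f` of `G □ H` and an efficient dominating set `S`
of `G`. For `u ∈ S`, summing `f` over the `G`-layers of the closed neighbourhood `N[u]` and
capping at `2` gives a Roman dominating function of `H`: a vertex `w` of value `0` forces
`f = 0` on `N[u] × {w}`, so the neighbour of `(u, w)` of value `2` lies in the `H`-layer of `u`.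
Hence each of these `|S| ≥ γ(G)` functions has weight at least `γ_R(H)`, and since the closed
neighbourhoods `N[u]` are pairwise disjoint their total weight is at most `w(f) = γ_R(G □ H)`.
-/

section Domination

variable {V W : Type*}

theorem domNum_le_card [Fintype V] {G : SimpleGraph V} {S : Finset V}
    (hS : IsDominatingSet G ↑S) : domNum G ≤ S.card :=
  Nat.sInf_le ⟨S, hS, rfl⟩

theorem romanDomNum_le_sum [Fintype V] {G : SimpleGraph V} {f : V → ℕ} (hf : IsRDF G f) :
    romanDomNum G ≤ ∑ v, f v :=
  Nat.sInf_le ⟨f, hf, rfl⟩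

theorem exists_isRDF_sum_eq_romanDomNum [Fintype V] (G : SimpleGraph V) :
    ∃ f : V → ℕ, IsRDF G f ∧ ∑ v, f v = romanDomNum G :=
  Nat.sInf_mem (s := {n | ∃ f : V → ℕ, IsRDF G f ∧ ∑ v, f v = n})
    ⟨_, fun _ => 2, ⟨fun _ => le_rfl, fun _ h => absurd h two_ne_zero⟩, rfl⟩

def capLayerSum (f : V × W → ℕ) (N : Finset V) (w : W) : ℕ :=
  min 2 (∑ v ∈ N, f (v, w))

theorem sum_capLayerSum_le [Fintype W] (f : V × W → ℕ) (N : Finset V) :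
    ∑ w, capLayerSum f N w ≤ ∑ v ∈ N, ∑ w, f (v, w) :=
  (sum_le_sum fun _ _ => min_le_right _ _).trans_eq sum_comm

theorem IsRDF.capLayerSum_of_boxProd {G : SimpleGraph V} {H : SimpleGraph W} {f : V × W → ℕ}
    (hf : IsRDF (G.boxProd H) f) {u : V} {N : Finset V} (hu : u ∈ N)
    (hN : ∀ v, G.Adj u v → v ∈ N) : IsRDF H (capLayerSum f N) := by
  refine ⟨fun _ => min_le_left _ _, fun w hw => ?_⟩
  have hzero : ∀ v ∈ N, f (v, w) = 0 := by
    rw [← sum_eq_zero_iff]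
    simpa [capLayerSum] using hw
  obtain ⟨⟨a, b⟩, hadj, hab⟩ := hf.2 (u, w) (hzero u hu)
  rcases SimpleGraph.boxProd_adj.1 hadj with ⟨hGa, rfl⟩ | ⟨hHb, rfl⟩
  · exact absurd (hzero a (hN a hGa.symm)) (by simp [hab])
  · refine ⟨b, hHb, le_antisymm (min_le_left _ _) (le_min le_rfl ?_)⟩
    rw [← hab]
    exact single_le_sum (f := fun v => f (v, b)) (fun _ _ => Nat.zero_le _) hu

end Domination

theorem sum_sum_le_univ_sum_of_pairwiseDisjoint {ι V : Type*} [Fintype V] [DecidableEq V]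
    {S : Finset ι} {N : ι → Finset V} (hN : (S : Set ι).PairwiseDisjoint N) (g : V → ℕ) :
    ∑ u ∈ S, ∑ v ∈ N u, g v ≤ ∑ v, g v :=
  (sum_biUnion hN).symm.trans_le (sum_le_univ_sum_of_nonneg fun _ => Nat.zero_le _)

theorem stmt9 {V W : Type*} [Fintype V] [Fintype W]
    (G : SimpleGraph V) (H : SimpleGraph W) (hG : HasEfficientDomSet G) :
    romanDomNum (G.boxProd H) ≥ domNum G * romanDomNum H := by
  classical
  obtain ⟨S, hSdom, hSdisj⟩ := hG
  obtain ⟨f, hf, hfsum⟩ := exists_isRDF_sum_eq_romanDomNum (G.boxProd H)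
  let N : V → Finset V := fun u => (insert u (G.neighborSet u)).toFinset
  have hN : (S : Set V).PairwiseDisjoint N := fun u hu v hv huv =>
    Set.disjoint_toFinset.2 (hSdisj u hu v hv huv)
  calc domNum G * romanDomNum H
      ≤ ∑ _u ∈ S, romanDomNum H := by
        rw [sum_const, smul_eq_mul]
        exact Nat.mul_le_mul_right _ (domNum_le_card hSdom)
    _ ≤ ∑ u ∈ S, ∑ w, capLayerSum f (N u) w :=
        sum_le_sum fun u _ => romanDomNum_le_sum (hf.capLayerSum_of_boxProd (u := u) (by simp [N])
          fun v h => by simp [N, h])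
    _ ≤ ∑ u ∈ S, ∑ v ∈ N u, ∑ w, f (v, w) := sum_le_sum fun u _ => sum_capLayerSum_le f (N u)
    _ ≤ ∑ v, ∑ w, f (v, w) := sum_sum_le_univ_sum_of_pairwiseDisjoint hN _
    _ = romanDomNum (G.boxProd H) := by rw [← hfsum, Fintype.sum_prod_type]
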